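/- If a subshift X contains a left-k-periodic point x ∈ Q_k whose σ-orbit is dense in X, then the kernel of the induced Aut(X)-action on Q_k is exactly the subgroup ⟨σ⟩ generated by the shift. -/

import Mathlib

def shift {A : Type*} (x : ℤ → A) : ℤ → A := fun n => x (n + 1)

def shiftIter {A : Type*} (i : ℤ) (x : ℤ → A) : ℤ → A := fun n => x (n + i)

def Qset {A : Type*} (X : Set (ℤ → A)) (k : ℕ) : Set (ℤ → A) :=
  {x | x ∈ X ∧ (∀ n : ℤ, n < k → x n = x (n - k)) ∧ x (k : ℤ) ≠ x ((k : ℤ) - k) ∧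
    ∀ k' : ℕ, 0 < k' → k' < k → ¬ ∀ n : ℤ, n < k → x n = x (n - k')}

def CommutesWithShift {A : Type*} [TopologicalSpace A] (X : Set (ℤ → A)) (g : X ≃ₜ X) : Prop :=
  ∀ (x : X) (hs : shift (x : ℤ → A) ∈ X),
    ((g ⟨shift (x : ℤ → A), hs⟩ : X) : ℤ → A) = shift ((g x : X) : ℤ → A)

/-!
A homeomorphism `g` commuting with `σ` commutes with every `σ^i`. If `g` acts trivially on `Q_k`,
then `g x₀ = σ^{-α(g, x₀)} x₀`, so `g` agrees with `σ^{-α(g, x₀)}` on the orbit of `x₀`, which is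
dense, hence everywhere. Conversely, if `g = σ^n` then `σ^{α(g,x) + n} x ∈ Q_k` for `x ∈ Q_k`, and
a nonzero shift of a point of `Q_k` never lies in `Q_k`: a negative shift moves the left-periodic
part of the point across the index `k`, where points of `Q_k` must break their period.
-/

section Shift

variable {A : Type*}

lemma shiftIter_shiftIter (a b : ℤ) (x : ℤ → A) :
    shiftIter a (shiftIter b x) = shiftIter (a + b) x := by
  funext n
  exact congrArg x (add_assoc n a b)

@[simp]
lemma shiftIter_zero (x : ℤ → A) : shiftIter 0 x = x := by
  funext n
  exact congrArg x (add_zero n)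

lemma shift_shiftIter (i : ℤ) (x : ℤ → A) : shift (shiftIter i x) = shiftIter (i + 1) x := by
  funext n
  exact congrArg x (by ring)

lemma shiftIter_neg_one (x : ℤ → A) : shiftIter (-1) x = fun n => x (n - 1) :=
  rfl

lemma shiftIter_eq_iff_eq_shiftIter_neg {a : ℤ} {x y : ℤ → A} :
    shiftIter a x = y ↔ x = shiftIter (-a) y := by
  constructor <;> rintro rfl <;> simp [shiftIter_shiftIter]

lemma shift_injective : Function.Injective (shift (A := A)) := fun x y h => by
  funext n
  simpa [shift] using congrFun h (n - 1)

lemma continuous_shiftIter [TopologicalSpace A] (i : ℤ) : Continuous (shiftIter (A := A) i) :=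
  continuous_pi fun n => continuous_apply (n + i)

end Shift

section Subshift

variable {A : Type*} {X : Set (ℤ → A)}

lemma shiftIter_mem (hinv : ∀ x ∈ X, shift x ∈ X)
    (hinv' : ∀ x ∈ X, (fun n : ℤ => x (n - 1)) ∈ X) (i : ℤ) {x : ℤ → A} (hx : x ∈ X) :
    shiftIter i x ∈ X := by
  induction i using Int.induction_on with
  | zero => simpa using hx
  | succ i ih => simpa [shift_shiftIter] using hinv _ ih
  | pred i ih =>
    rw [sub_eq_neg_add, ← shiftIter_shiftIter, shiftIter_neg_one]
    exact hinv' _ ih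

namespace CommutesWithShift

variable [TopologicalSpace A] {g : X ≃ₜ X}

lemma apply_eq_shift (hg : CommutesWithShift X g) {x y : X} (h : (y : ℤ → A) = shift x) :
    (g y : ℤ → A) = shift (g x) := by
  obtain ⟨y, hy⟩ := y
  subst h
  exact hg x hy

lemma apply_eq_shiftIter (hinv : ∀ x ∈ X, shift x ∈ X)
    (hinv' : ∀ x ∈ X, (fun n : ℤ => x (n - 1)) ∈ X) (hg : CommutesWithShift X g) (i : ℤ)
    {x y : X} (h : (y : ℤ → A) = shiftIter i x) : (g y : ℤ → A) = shiftIter i (g x) := by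
  induction i using Int.induction_on generalizing y with
  | zero =>
    rw [shiftIter_zero] at h ⊢
    rw [Subtype.ext h]
  | succ i ih =>
    let z : X := ⟨shiftIter i x, shiftIter_mem hinv hinv' i x.2⟩
    rw [hg.apply_eq_shift (x := z) (by rw [h, shift_shiftIter]), ih rfl, shift_shiftIter]
  | pred i ih =>
    let z : X := ⟨shiftIter (-i) x, shiftIter_mem hinv hinv' _ x.2⟩
    apply shift_injective
    rw [← hg.apply_eq_shift (x := y) (y := z) (by simp [z, h, shift_shiftIter]), ih rfl,
      shift_shiftIter, sub_add_cancel]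

lemma eq_shiftIter_of_dense_orbit [T2Space A] (hinv : ∀ x ∈ X, shift x ∈ X)
    (hinv' : ∀ x ∈ X, (fun n : ℤ => x (n - 1)) ∈ X) (hg : CommutesWithShift X g) {x₀ : X}
    (hdense : ∀ y ∈ X, y ∈ closure {z | ∃ i : ℤ, z = shiftIter i x₀}) {n : ℤ}
    (h : (g x₀ : ℤ → A) = shiftIter n x₀) (y : X) : (g y : ℤ → A) = shiftIter n y := by
  set O : Set X := Subtype.val ⁻¹' {z | ∃ i : ℤ, z = shiftIter i x₀}
  have hO : Dense O := by
    rw [Subtype.dense_iff, Subtype.image_preimage_coe, Set.inter_eq_right.mpr]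
    · exact hdense
    · rintro _ ⟨i, rfl⟩
      exact shiftIter_mem hinv hinv' i x₀.2
  have hagree : Set.EqOn (fun z : X => (g z : ℤ → A)) (fun z => shiftIter n z) O := by
    rintro z ⟨i, hi⟩
    simp only [hg.apply_eq_shiftIter hinv hinv' i hi, h, hi, shiftIter_shiftIter, add_comm]
  exact congrFun (Continuous.ext_on hO (by fun_prop) ((continuous_shiftIter n).comp
    continuous_subtype_val) hagree) y

end CommutesWithShift

end Subshift

namespace Qset

variable {A : Type*} {X : Set (ℤ → A)} {k : ℕ} {x : ℤ → A} {m : ℤ}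

lemma nonneg_of_shiftIter_mem (hx : x ∈ Qset X k) (hm : shiftIter m x ∈ Qset X k) : 0 ≤ m := by
  by_contra! hneg
  apply hm.2.2.1
  change x (k + m) = x (k - k + m)
  rw [hx.2.1 (k + m) (by omega)]
  congr 1
  ring

lemma eq_zero_of_shiftIter_mem (hx : x ∈ Qset X k) (hm : shiftIter m x ∈ Qset X k) : m = 0 := by
  have hback : shiftIter (-m) (shiftIter m x) ∈ Qset X k := by simpa [shiftIter_shiftIter]
  have := nonneg_of_shiftIter_mem hm hback
  have := nonneg_of_shiftIter_mem hx hm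
  omega

end Qset

theorem stmt10_general {A : Type*} [TopologicalSpace A] [DiscreteTopology A]
    (X : Set (ℤ → A))
    (hinv : ∀ x ∈ X, shift x ∈ X) (hinv' : ∀ x ∈ X, (fun n : ℤ => x (n - 1)) ∈ X)
    (k : ℕ)
    (α : (X ≃ₜ X) → (ℤ → A) → ℤ)
    (hα : ∀ g : X ≃ₜ X, CommutesWithShift X g → ∀ (x : ℤ → A) (hx : x ∈ Qset X k),
      shiftIter (α g x) ((g ⟨x, hx.1⟩ : X) : ℤ → A) ∈ Qset X k)
    (x₀ : ℤ → A) (hx₀ : x₀ ∈ Qset X k)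
    (hdense : ∀ y ∈ X, y ∈ closure {z | ∃ i : ℤ, z = shiftIter i x₀}) :
    ∀ g : X ≃ₜ X, CommutesWithShift X g →
      ((∀ (x : ℤ → A) (hx : x ∈ Qset X k),
          shiftIter (α g x) ((g ⟨x, hx.1⟩ : X) : ℤ → A) = x) ↔
        ∃ n : ℤ, ∀ y : X, ((g y : X) : ℤ → A) = shiftIter n (y : ℤ → A)) := by
  intro g hg
  constructor
  · intro htriv
    exact ⟨-α g x₀, hg.eq_shiftIter_of_dense_orbit hinv hinv' (x₀ := ⟨x₀, hx₀.1⟩)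
      hdense (shiftIter_eq_iff_eq_shiftIter_neg.mp (htriv x₀ hx₀))⟩
  · rintro ⟨n, hn⟩ x hx
    have hmem := hα g hg x hx
    rw [hn, shiftIter_shiftIter] at hmem ⊢
    rw [Qset.eq_zero_of_shiftIter_mem hx hmem, shiftIter_zero]

/-- If `Q_k` contains a point with dense `σ`-orbit, the kernel of the induced
`Aut(X)`-action on `Q_k` is exactly `⟨σ⟩`. -/
theorem stmt10 {A : Type*} [Fintype A] [TopologicalSpace A] [DiscreteTopology A]
    (X : Set (ℤ → A)) (hcl : IsClosed X)
    (hinv : ∀ x ∈ X, shift x ∈ X) (hinv' : ∀ x ∈ X, (fun n : ℤ => x (n - 1)) ∈ X)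
    (k : ℕ) (hk : 0 < k)
    (α : (X ≃ₜ X) → (ℤ → A) → ℤ)
    (hα : ∀ g : X ≃ₜ X, CommutesWithShift X g → ∀ (x : ℤ → A) (hx : x ∈ Qset X k),
      shiftIter (α g x) ((g ⟨x, hx.1⟩ : X) : ℤ → A) ∈ Qset X k)
    (x₀ : ℤ → A) (hx₀ : x₀ ∈ Qset X k)
    (hdense : ∀ y ∈ X, y ∈ closure {z | ∃ i : ℤ, z = shiftIter i x₀}) :
    ∀ g : X ≃ₜ X, CommutesWithShift X g →
      ((∀ (x : ℤ → A) (hx : x ∈ Qset X k),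
          shiftIter (α g x) ((g ⟨x, hx.1⟩ : X) : ℤ → A) = x) ↔
        ∃ n : ℤ, ∀ y : X, ((g y : X) : ℤ → A) = shiftIter n (y : ℤ → A)) :=
  stmt10_general X hinv hinv' k α hα x₀ hx₀ hdense
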